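/- Let g be a Lorentzian metric on a neighborhood of (0,0) in ℝ² and R > 0 satisfy ∇_α∇_β R = (m̂/R²)g_{αβ} with m̂ = (1/2)R(0,0) > 0 and ∇R(0,0) = 0, where m(x,t) := (1/2)R(1−g(∇R,∇R)) is constant equal to m̂. Suppose additionally that along the slice t = 0 every point x with ∂_x R(x,0) = 0 satisfies R(x,0) ≤ 2m̂, that the slice {t=0} is compact (a circle), and g_{xx} > 0 on it. Then a contradiction follows; i.e., no such configuration exists. -/

import Mathlib

/-! A continuous periodic function attains its maximum, at a critical point; the hypothesis on
critical values then makes `0` a global maximum of `R`. At a local maximum the second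
derivative test forbids `R''(0) > 0`, which the Hessian equation forces. -/

open Filter Topology

theorem Function.Periodic.exists_forall_ge_of_continuous {α : Type*} [TopologicalSpace α]
    [LinearOrder α] [ClosedIciTopology α] {f : ℝ → α} {c : ℝ} (hp : Periodic f c) (hc : c ≠ 0)
    (hf : Continuous f) : ∃ x, ∀ y, f y ≤ f x := by
  obtain ⟨_, ⟨x, rfl⟩, hx⟩ :=
    (hp.compact_of_continuous hc hf).exists_isGreatest (Set.range_nonempty f)
  exact ⟨x, fun y => hx ⟨y, rfl⟩⟩

/-- If `f''(a) > 0` at a critical point, `a` is also a local minimum, so `f` is locally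
constant and `f''(a) = 0`. -/
theorem IsLocalMax.deriv_deriv_nonpos {f : ℝ → ℝ} {a : ℝ} (h : IsLocalMax f a)
    (hd : deriv f a = 0) (hc : ContinuousAt f a) : deriv (deriv f) a ≤ 0 := by
  by_contra! hpos
  have hmin := isLocalMin_of_deriv_deriv_pos hpos hd hc
  have hconst : f =ᶠ[𝓝 a] fun _ => f a := (h.and hmin).mono fun _ hx => le_antisymm hx.1 hx.2
  have hderiv : deriv f =ᶠ[𝓝 a] fun _ => 0 := by
    simpa only [deriv_const'] using hconst.deriv
  simp [hderiv.deriv_eq] at hpos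

theorem stmt_15_general (R : ℝ → ℝ) (mhat L gxx : ℝ)
    (hR2 : ContDiff ℝ 2 R) (hper : Function.Periodic R L) (hL : 0 < L)
    (hm : 0 < mhat)
    (hR0 : R 0 = 2 * mhat)
    (hcrit0 : deriv R 0 = 0)
    (hbound : ∀ x, deriv R x = 0 → R x ≤ 2 * mhat)
    (hsecond : deriv (deriv R) 0 = (mhat / (R 0)^2) * gxx)
    (hgxx : 0 < gxx) : False := by
  have hcont : Continuous R := hR2.continuous
  obtain ⟨x₀, hx₀⟩ := hper.exists_forall_ge_of_continuous hL.ne' hcont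
  have hcrit : deriv R x₀ = 0 := IsLocalMax.deriv_eq_zero (.of_forall hx₀)
  have hmax : IsLocalMax R 0 :=
    .of_forall fun y => (hx₀ y).trans (hR0 ▸ hbound x₀ hcrit)
  have hpos : 0 < deriv (deriv R) 0 := by
    rw [hsecond, hR0]
    positivity
  exact hpos.not_ge (hmax.deriv_deriv_nonpos hcrit0 hcont.continuousAt)

theorem stmt_15 (R : ℝ → ℝ) (mhat L gxx : ℝ)
    (hR2 : ContDiff ℝ 2 R) (hper : Function.Periodic R L) (hL : 0 < L)
    (hm : 0 < mhat) (hRpos : ∀ x, 0 < R x)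
    (hR0 : R 0 = 2 * mhat)
    (hcrit0 : deriv R 0 = 0)
    (hbound : ∀ x, deriv R x = 0 → R x ≤ 2 * mhat)
    (hsecond : deriv (deriv R) 0 = (mhat / (R 0)^2) * gxx)
    (hgxx : 0 < gxx) : False :=
  stmt_15_general R mhat L gxx hR2 hper hL hm hR0 hcrit0 hbound hsecond hgxx
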